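/- The square of the third theta-null has the eta-quotient representation θ₃(τ)² = η(2τ)^{10}/(η(τ)⁴·η(4τ)⁴) for all τ in the upper half-plane. -/

import Mathlib

open Complex

noncomputable section

/-- q = exp(2πiτ). -/
def qq (τ : ℂ) : ℂ := Complex.exp (2 * Real.pi * Complex.I * τ)

/-- The Dedekind eta function η(τ) = exp(πiτ/12)·∏_{n≥1} (1 − qⁿ). -/
def dedekindEta (τ : ℂ) : ℂ :=
  Complex.exp (Real.pi * Complex.I * τ / 12) * ∏' n : ℕ, (1 - qq τ ^ (n + 1))

/-- The Jacobi theta-null θ₃. -/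
def theta3 (τ : ℂ) : ℂ :=
  ∑' m : ℤ, Complex.exp (2 * Real.pi * Complex.I * τ * (m : ℂ) ^ 2)

/-!
With `x = e^{2πiτ}` and `φ(x) = ∏_{n ≥ 1} (1 - xⁿ)`, the theorem is Gauss's identity
`∑ₘ x^{m²} = φ(x²) ∏ₙ (1 + x^{2n+1})²` combined with
`∏ₙ (1 + x^{2n+1}) = φ(x²)² / (φ(x) φ(x⁴))`, which comes from splitting `φ` into its even and odd
factors; the powers of `e^{πiτ/12}` in the eta quotient cancel.

Gauss's identity is the limit `N → ∞` of its finite form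
`∑ₘ x^{m²} [2N, N + m]_{x²} = ∏_{j < N} (1 + x^{2j+1})²`, which follows by induction from the
Pascal recursions of the Gaussian binomials. The binomials `[2N, N + m]_{x²}` tend to `1 / φ(x²)`
and are bounded by `φ(|x|²)⁻²`, so dominated convergence applies.
-/

open Finset Filter Function Topology

def qPochhammer {R : Type*} [CommRing R] (Q : R) (n : ℕ) : R :=
  ∏ i ∈ range n, (1 - Q ^ (i + 1))

lemma qPochhammer_succ {R : Type*} [CommRing R] (Q : R) (n : ℕ) :
    qPochhammer Q (n + 1) = qPochhammer Q n * (1 - Q ^ (n + 1)) :=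
  prod_range_succ _ _

section QBinomial

variable {K : Type*} [Field K] {Q : K}

/-- The Gaussian binomial `[n, k]_Q`. The lower index is an integer, and the coefficient vanishes
for `k ∉ [0, n]`. -/
def qBinom (Q : K) : ℕ → ℤ → K
  | 0, k => if k = 0 then 1 else 0
  | n + 1, k => qBinom Q n (k - 1) + Q ^ k * qBinom Q n k

@[simp] lemma qBinom_zero (k : ℤ) : qBinom Q 0 k = if k = 0 then 1 else 0 := rfl

lemma qBinom_succ (n : ℕ) (k : ℤ) :
    qBinom Q (n + 1) k = qBinom Q n (k - 1) + Q ^ k * qBinom Q n k := rfl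

lemma qBinom_of_neg (n : ℕ) {k : ℤ} (hk : k < 0) : qBinom Q n k = 0 := by
  induction n generalizing k with
  | zero => rw [qBinom_zero, if_neg hk.ne]
  | succ n ih => rw [qBinom_succ, ih (by omega), ih hk, mul_zero, add_zero]

lemma qBinom_of_lt {n : ℕ} {k : ℤ} (hk : n < k) : qBinom Q n k = 0 := by
  induction n generalizing k with
  | zero => rw [qBinom_zero, if_neg (by omega)]
  | succ n ih => rw [qBinom_succ, ih (by omega), ih (by omega), mul_zero, add_zero]

@[simp] lemma qBinom_zero_right (n : ℕ) : qBinom Q n 0 = 1 := by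
  induction n with
  | zero => simp
  | succ n ih => simp [qBinom_succ, ih, qBinom_of_neg]

@[simp] lemma qBinom_self (n : ℕ) : qBinom Q n n = 1 := by
  induction n with
  | zero => simp
  | succ n ih => simp [qBinom_succ, ih, qBinom_of_lt]

lemma qBinom_mul_qPochhammer_mul_qPochhammer {n k : ℕ} (hk : k ≤ n) :
    qBinom Q n k * (qPochhammer Q k * qPochhammer Q (n - k)) = qPochhammer Q n := by
  induction n generalizing k with
  | zero => simp [Nat.le_zero.1 hk, qPochhammer]
  | succ n ih =>
    rcases k with _ | k
    · simp [qPochhammer]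
    obtain rfl | hkn := eq_or_lt_of_le (Nat.succ_le_succ_iff.1 hk)
    · rw [Nat.sub_self, qBinom_self, one_mul]; simp [qPochhammer]
    obtain ⟨m, rfl⟩ : ∃ m, n = k + 1 + m := ⟨n - (k + 1), by omega⟩
    have h₁ := ih (k := k) (by omega)
    have h₂ := ih (k := k + 1) (by omega)
    rw [show k + 1 + m - k = m + 1 by omega, qPochhammer_succ] at h₁
    rw [show k + 1 + m - (k + 1) = m by omega, qPochhammer_succ] at h₂
    rw [show k + 1 + m + 1 - (k + 1) = m + 1 by omega, qPochhammer_succ, qPochhammer_succ,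
      qPochhammer_succ, qBinom_succ, show ((k + 1 : ℕ) : ℤ) - 1 = k by push_cast; ring,
      zpow_natCast]
    linear_combination (1 - Q ^ (k + 1)) * h₁ + Q ^ (k + 1) * (1 - Q ^ (m + 1)) * h₂

lemma qBinom_succ' (hQ : Q ≠ 0) (n : ℕ) (k : ℤ) :
    qBinom Q (n + 1) k = Q ^ ((n : ℤ) + 1 - k) * qBinom Q n (k - 1) + qBinom Q n k := by
  induction n generalizing k with
  | zero =>
    rw [qBinom_succ]
    rcases eq_or_ne k 0 with rfl | h₀
    · simp
    rcases eq_or_ne k 1 with rfl | h₁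
    · simp
    simp [h₀, h₁, sub_eq_zero]
  | succ n ih =>
    have l₁ := ih (k - 1)
    have l₂ := ih k
    have r₁ := qBinom_succ (Q := Q) n (k - 1)
    have r₂ := qBinom_succ (Q := Q) n k
    have e₁ : Q ^ k * Q ^ ((n : ℤ) + 1 - k) = Q ^ (((n + 1 : ℕ) : ℤ) + 1 - k) * Q ^ (k - 1) := by
      rw [← zpow_add₀ hQ, ← zpow_add₀ hQ]; congr 1; push_cast; ring
    have e₂ : Q ^ ((n : ℤ) + 1 - (k - 1)) = Q ^ (((n + 1 : ℕ) : ℤ) + 1 - k) := by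
      congr 1; push_cast; ring
    rw [qBinom_succ (n + 1)]
    linear_combination l₁ + Q ^ k * l₂ - Q ^ (((n + 1 : ℕ) : ℤ) + 1 - k) * r₁ - r₂
      + qBinom Q n (k - 1 - 1) * e₂ + qBinom Q n (k - 1) * e₁

lemma qBinom_add_two (hQ : Q ≠ 0) (n : ℕ) (k : ℤ) :
    qBinom Q (n + 2) k = Q ^ ((n : ℤ) + 2 - k) * qBinom Q n (k - 2)
      + (1 + Q ^ (n + 1)) * qBinom Q n (k - 1) + Q ^ k * qBinom Q n k := by
  have e₁ : Q ^ ((n : ℤ) + 1 - (k - 1)) = Q ^ ((n : ℤ) + 2 - k) := by congr 1; ring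
  have e₂ : Q ^ k * Q ^ ((n : ℤ) + 1 - k) = Q ^ (n + 1) := by
    rw [← zpow_add₀ hQ, ← zpow_natCast]; congr 1; push_cast; ring
  rw [qBinom_succ (n + 1), qBinom_succ' hQ n (k - 1), qBinom_succ' hQ n k, e₁,
    show k - 1 - 1 = k - 2 by ring]
  linear_combination qBinom Q n (k - 1) * e₂

end QBinomial

section FiniteTheta

variable {K : Type*} [Field K] {x : K}

def finiteThetaTerm (x : K) (N : ℕ) (m : ℤ) : K :=
  x ^ (m ^ 2) * qBinom (x ^ 2) (2 * N) (N + m)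

lemma finiteThetaTerm_eq_zero {N : ℕ} {m : ℤ} (h : N < |m|) : finiteThetaTerm x N m = 0 := by
  rw [finiteThetaTerm]
  rcases abs_cases m with ⟨hm, -⟩ | ⟨hm, -⟩ <;> rw [hm] at h
  · rw [qBinom_of_lt (by push_cast; omega), mul_zero]
  · rw [qBinom_of_neg _ (by omega), mul_zero]

lemma hasFiniteSupport_finiteThetaTerm (N : ℕ) : (finiteThetaTerm x N).HasFiniteSupport :=
  (Set.finite_Icc (-(N : ℤ)) N).subset fun m hm => by
    rw [Set.mem_Icc, ← abs_le]
    exact not_lt.1 fun h => hm (finiteThetaTerm_eq_zero h)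

lemma finiteThetaTerm_succ (hx : x ≠ 0) (N : ℕ) (m : ℤ) :
    finiteThetaTerm x (N + 1) m = x ^ (2 * N + 1) * finiteThetaTerm x N (m + -1)
      + (1 + x ^ (4 * N + 2)) * finiteThetaTerm x N m
      + x ^ (2 * N + 1) * finiteThetaTerm x N (m + 1) := by
  have hsq (z : ℤ) : (x ^ 2) ^ z = x ^ (2 * z) := by
    rw [← zpow_natCast, ← zpow_mul, Nat.cast_ofNat]
  have e₁ : x ^ (m ^ 2) * x ^ (2 * ((2 * N : ℕ) + 2 - (N + (m + 1)) : ℤ))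
      = x ^ (2 * N + 1) * x ^ ((m + -1) ^ 2) := by
    rw [← zpow_natCast, ← zpow_add₀ hx, ← zpow_add₀ hx]; congr 1; push_cast; ring
  have e₂ : x ^ (m ^ 2) * x ^ (2 * ((N : ℤ) + (m + 1)))
      = x ^ (2 * N + 1) * x ^ ((m + 1) ^ 2) := by
    rw [← zpow_natCast, ← zpow_add₀ hx, ← zpow_add₀ hx]; congr 1; push_cast; ring
  have e₃ : (x ^ 2) ^ (2 * N + 1) = x ^ (4 * N + 2) := by rw [← pow_mul]; ring_nf
  rw [finiteThetaTerm, show 2 * (N + 1) = 2 * N + 2 by ring,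
    show ((N + 1 : ℕ) : ℤ) + m = N + (m + 1) by push_cast; ring, qBinom_add_two (pow_ne_zero 2 hx),
    show (N : ℤ) + (m + 1) - 2 = N + (m + -1) by ring, show (N : ℤ) + (m + 1) - 1 = N + m by ring,
    hsq, hsq, e₃]
  simp only [finiteThetaTerm]
  linear_combination qBinom (x ^ 2) (2 * N) (N + (m + -1)) * e₁
    + qBinom (x ^ 2) (2 * N) (N + (m + 1)) * e₂

lemma finsum_finiteThetaTerm (hx : x ≠ 0) (N : ℕ) :
    ∑ᶠ m, finiteThetaTerm x N m = ∏ j ∈ range N, (1 + x ^ (2 * j + 1)) ^ 2 := by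
  induction N with
  | zero =>
    rw [finsum_eq_single _ 0 fun m hm => finiteThetaTerm_eq_zero (by simpa using hm)]
    simp [finiteThetaTerm]
  | succ N ih =>
    have ha := hasFiniteSupport_finiteThetaTerm (x := x) N
    have hshift (c : ℤ) : HasFiniteSupport fun m => finiteThetaTerm x N (m + c) :=
      ha.comp_of_injective (add_left_injective c)
    have hsum (c : ℤ) : ∑ᶠ m, finiteThetaTerm x N (m + c) = ∑ᶠ m, finiteThetaTerm x N m :=
      finsum_comp_equiv (Equiv.addRight c)
    simp_rw [finiteThetaTerm_succ hx]
    rw [finsum_add_distrib, finsum_add_distrib, ← mul_finsum, ← mul_finsum, ← mul_finsum, hsum,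
      hsum, ih, prod_range_succ]
    · ring
    all_goals fun_prop

end FiniteTheta

def eulerPhi {R : Type*} [CommRing R] [TopologicalSpace R] (x : R) : R :=
  ∏' n : ℕ, (1 - x ^ (n + 1))

section EulerFunction

variable {K : Type*} [NormedField K] {x : K}

lemma norm_pow_lt_one (hx : ‖x‖ < 1) {n : ℕ} (hn : n ≠ 0) : ‖x ^ n‖ < 1 := by
  rw [norm_pow]
  exact pow_lt_one₀ (norm_nonneg x) hx hn

lemma summable_norm_pow_comp (hx : ‖x‖ < 1) {e : ℕ → ℕ} (he : Injective e) :
    Summable fun n => ‖x ^ e n‖ := by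
  simp_rw [norm_pow]
  exact (summable_geometric_of_lt_one (norm_nonneg x) hx).comp_injective he

lemma norm_qBinom_le (n : ℕ) (k : ℤ) : ‖qBinom x n k‖ ≤ qBinom ‖x‖ n k := by
  induction n generalizing k with
  | zero => rw [qBinom_zero, qBinom_zero]; split_ifs <;> simp
  | succ n ih =>
    rw [qBinom_succ, qBinom_succ]
    refine (norm_add_le _ _).trans (add_le_add (ih _) ?_)
    rw [norm_mul, norm_zpow]
    exact mul_le_mul_of_nonneg_left (ih k) (zpow_nonneg (norm_nonneg x) k)

lemma qPochhammer_ne_zero (hx : ‖x‖ < 1) (n : ℕ) : qPochhammer x n ≠ 0 :=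
  prod_ne_zero_iff.2 fun i _ h => (norm_pow_lt_one hx i.succ_ne_zero).ne
    (by rw [show x ^ (i + 1) = 1 by linear_combination -h, norm_one])

lemma qBinom_eq_div (hx : ‖x‖ < 1) {n k : ℕ} (hk : k ≤ n) :
    qBinom x n k = qPochhammer x n / (qPochhammer x k * qPochhammer x (n - k)) := by
  rw [eq_div_iff (mul_ne_zero (qPochhammer_ne_zero hx k) (qPochhammer_ne_zero hx (n - k))),
    qBinom_mul_qPochhammer_mul_qPochhammer hk]

variable [CompleteSpace K]

lemma multipliable_one_add_pow_comp (hx : ‖x‖ < 1) {e : ℕ → ℕ} (he : Injective e) :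
    Multipliable fun n => 1 + x ^ e n :=
  multipliable_one_add_of_summable (summable_norm_pow_comp hx he)

lemma multipliable_one_sub_pow_comp (hx : ‖x‖ < 1) {e : ℕ → ℕ} (he : Injective e) :
    Multipliable fun n => 1 - x ^ e n := by
  simpa only [sub_eq_add_neg] using
    multipliable_one_add_of_summable (f := fun n => -x ^ e n)
      (by simpa only [norm_neg] using summable_norm_pow_comp hx he)

lemma eulerPhi_ne_zero (hx : ‖x‖ < 1) : eulerPhi x ≠ 0 := by
  simpa only [eulerPhi, sub_eq_add_neg] using
    tprod_one_add_ne_zero_of_summable (f := fun n => -x ^ (n + 1))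
      (fun n h => (norm_pow_lt_one hx n.succ_ne_zero).ne
        (by rw [show x ^ (n + 1) = 1 by linear_combination -h, norm_one]))
      (by simpa only [norm_neg] using summable_norm_pow_comp hx (add_left_injective 1))

lemma tendsto_qPochhammer (hx : ‖x‖ < 1) :
    Tendsto (qPochhammer x) atTop (𝓝 (eulerPhi x)) :=
  (multipliable_one_sub_pow_comp hx (add_left_injective 1)).hasProd.tendsto_prod_nat

end EulerFunction

section RealEulerFunction

variable {r : ℝ}

lemma one_sub_pow_nonneg (hr₀ : 0 ≤ r) (hr₁ : r ≤ 1) (n : ℕ) : 0 ≤ 1 - r ^ n :=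
  sub_nonneg.2 (pow_le_one₀ hr₀ hr₁)

lemma qPochhammer_nonneg (hr₀ : 0 ≤ r) (hr₁ : r ≤ 1) (n : ℕ) : 0 ≤ qPochhammer r n :=
  prod_nonneg fun _ _ => one_sub_pow_nonneg hr₀ hr₁ _

lemma qPochhammer_le_one (hr₀ : 0 ≤ r) (hr₁ : r ≤ 1) (n : ℕ) : qPochhammer r n ≤ 1 :=
  prod_le_one (fun _ _ => one_sub_pow_nonneg hr₀ hr₁ _)
    fun _ _ => sub_le_self _ (pow_nonneg hr₀ _)

lemma antitone_qPochhammer (hr₀ : 0 ≤ r) (hr₁ : r ≤ 1) : Antitone (qPochhammer r) :=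
  antitone_nat_of_succ_le fun n => by
    rw [qPochhammer_succ]
    exact mul_le_of_le_one_right (qPochhammer_nonneg hr₀ hr₁ n) (sub_le_self _ (pow_nonneg hr₀ _))

lemma eulerPhi_pos (hr₀ : 0 ≤ r) (hr₁ : r < 1) : 0 < eulerPhi r := by
  have hr : ‖r‖ < 1 := by rwa [Real.norm_of_nonneg hr₀]
  exact (tprod_nonneg fun _ => one_sub_pow_nonneg hr₀ hr₁.le _).lt_of_ne' (eulerPhi_ne_zero hr)

lemma eulerPhi_le_qPochhammer (hr₀ : 0 ≤ r) (hr₁ : r < 1) (n : ℕ) : eulerPhi r ≤ qPochhammer r n :=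
  (antitone_qPochhammer hr₀ hr₁.le).le_of_tendsto
    (tendsto_qPochhammer (by rwa [Real.norm_of_nonneg hr₀])) n

lemma qBinom_le_inv_eulerPhi_sq (hr₀ : 0 ≤ r) (hr₁ : r < 1) (n : ℕ) (k : ℤ) :
    qBinom r n k ≤ (eulerPhi r)⁻¹ ^ 2 := by
  have hφ := eulerPhi_pos hr₀ hr₁
  rcases lt_or_ge k 0 with hk | hk
  · rw [qBinom_of_neg n hk]; positivity
  rcases lt_or_ge (n : ℤ) k with hkn | hkn
  · rw [qBinom_of_lt hkn]; positivity
  lift k to ℕ using hk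
  rw [qBinom_eq_div (by rwa [Real.norm_of_nonneg hr₀]) (by exact_mod_cast hkn), inv_pow, sq,
    ← one_div]
  exact div_le_div₀ zero_le_one (qPochhammer_le_one hr₀ hr₁.le n) (mul_pos hφ hφ)
    (mul_le_mul (eulerPhi_le_qPochhammer hr₀ hr₁ k) (eulerPhi_le_qPochhammer hr₀ hr₁ _) hφ.le
      (qPochhammer_nonneg hr₀ hr₁.le k))

end RealEulerFunction

lemma summable_pow_natAbs {r : ℝ} (hr₀ : 0 ≤ r) (hr₁ : r < 1) :
    Summable fun m : ℤ => r ^ m.natAbs := by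
  have h := summable_geometric_of_lt_one hr₀ hr₁
  exact summable_int_iff_summable_nat_and_neg.2 ⟨by simpa using h, by simpa using h⟩

section GaussIdentity

variable {K : Type*} [NormedField K] {x : K}

lemma norm_finiteThetaTerm_le (hx₀ : x ≠ 0) (hx : ‖x‖ < 1) (N : ℕ) (m : ℤ) :
    ‖finiteThetaTerm x N m‖ ≤ (eulerPhi ‖x ^ 2‖)⁻¹ ^ 2 * ‖x‖ ^ m.natAbs := by
  rw [finiteThetaTerm, norm_mul, norm_zpow, mul_comm]
  have hbinom : ‖qBinom (x ^ 2) (2 * N) (N + m)‖ ≤ (eulerPhi ‖x ^ 2‖)⁻¹ ^ 2 :=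
    (norm_qBinom_le _ _).trans
      (qBinom_le_inv_eulerPhi_sq (norm_nonneg _) (norm_pow_lt_one hx two_ne_zero) _ _)
  have hpow : ‖x‖ ^ (m ^ 2) ≤ ‖x‖ ^ m.natAbs := by
    rw [← zpow_natCast]
    exact zpow_le_zpow_right_of_le_one₀ (norm_pos_iff.2 hx₀) hx.le (Int.natAbs_le_self_sq m)
  exact mul_le_mul hbinom hpow (by positivity) (by positivity)

variable [CompleteSpace K]

lemma tendsto_qBinom_two_mul (hx : ‖x‖ < 1) (m : ℤ) :
    Tendsto (fun N : ℕ => qBinom x (2 * N) (N + m)) atTop (𝓝 (eulerPhi x)⁻¹) := by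
  have hidx {f : ℕ → ℕ} (hf : ∀ N, N ≤ f N + m.natAbs) : Tendsto f atTop atTop :=
    tendsto_atTop_atTop.2 fun b => ⟨b + m.natAbs, fun N hN => by have := hf N; omega⟩
  have hP := tendsto_qPochhammer hx
  have hφ := eulerPhi_ne_zero hx
  have hlim := (hP.comp (hidx (f := fun N => 2 * N) fun N => by omega)).div
    ((hP.comp (hidx (f := fun N => ((N : ℤ) + m).toNat) fun N => by omega)).mul
      (hP.comp (hidx (f := fun N => 2 * N - ((N : ℤ) + m).toNat) fun N => by omega)))
    (mul_ne_zero hφ hφ)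
  rw [show eulerPhi x / (eulerPhi x * eulerPhi x) = (eulerPhi x)⁻¹ by field_simp] at hlim
  refine hlim.congr' ?_
  filter_upwards [eventually_ge_atTop m.natAbs] with N hN
  obtain ⟨j, hj⟩ : ∃ j : ℕ, (N : ℤ) + m = j := ⟨_, (Int.toNat_of_nonneg (by omega)).symm⟩
  simp only [Pi.div_apply, Function.comp_apply, hj, Int.toNat_natCast]
  rw [qBinom_eq_div hx (by omega)]

theorem tsum_zpow_sq (hx₀ : x ≠ 0) (hx : ‖x‖ < 1) :
    ∑' m : ℤ, x ^ (m ^ 2) = eulerPhi (x ^ 2) * (∏' n : ℕ, (1 + x ^ (2 * n + 1))) ^ 2 := by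
  have hx₂ := norm_pow_lt_one hx two_ne_zero
  have hodd : Injective fun n : ℕ => 2 * n + 1 := fun a b h => by simpa using h
  have h₁ : Tendsto (fun N => ∑' m, finiteThetaTerm x N m) atTop
      (𝓝 (∑' m : ℤ, x ^ (m ^ 2) * (eulerPhi (x ^ 2))⁻¹)) :=
    tendsto_tsum_of_dominated_convergence ((summable_pow_natAbs (norm_nonneg x) hx).mul_left _)
      (fun m => (tendsto_qBinom_two_mul hx₂ m).const_mul _)
      (.of_forall fun N m => norm_finiteThetaTerm_le hx₀ hx N m)
  have h₂ : Tendsto (fun N => ∑' m, finiteThetaTerm x N m) atTop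
      (𝓝 ((∏' n : ℕ, (1 + x ^ (2 * n + 1))) ^ 2)) := by
    simp_rw [tsum_eq_finsum (hasFiniteSupport_finiteThetaTerm _), finsum_finiteThetaTerm hx₀,
      prod_pow]
    exact (multipliable_one_add_pow_comp hx hodd).hasProd.tendsto_prod_nat.pow 2
  have h := tendsto_nhds_unique h₁ h₂
  rw [tsum_mul_right] at h
  rw [← h, mul_comm, inv_mul_cancel_right₀ (eulerPhi_ne_zero hx₂)]

end GaussIdentity

section ProductIdentities

variable {K : Type*} [NormedField K] [CompleteSpace K] {x : K}

lemma eulerPhi_eq_tprod_mul_eulerPhi_sq (hx : ‖x‖ < 1) :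
    eulerPhi x = (∏' n : ℕ, (1 - x ^ (2 * n + 1))) * eulerPhi (x ^ 2) := by
  have heven := multipliable_one_sub_pow_comp hx (e := fun n => 2 * n + 1)
    fun a b h => by simpa using h
  have hodd := multipliable_one_sub_pow_comp hx (e := fun n => 2 * n + 1 + 1)
    fun a b h => by simpa using h
  rw [eulerPhi, ← tprod_even_mul_odd (f := fun n => 1 - x ^ (n + 1)) heven hodd, eulerPhi]
  exact congrArg _ (tprod_congr fun n => by rw [← pow_mul]; ring_nf)

lemma tprod_one_add_mul_tprod_one_sub (hx : ‖x‖ < 1) :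
    (∏' n : ℕ, (1 + x ^ (2 * n + 1))) * ∏' n : ℕ, (1 - x ^ (2 * n + 1))
      = ∏' n : ℕ, (1 - (x ^ 2) ^ (2 * n + 1)) := by
  have hodd : Injective fun n : ℕ => 2 * n + 1 := fun a b h => by simpa using h
  rw [← (multipliable_one_add_pow_comp hx hodd).tprod_mul (multipliable_one_sub_pow_comp hx hodd)]
  exact tprod_congr fun n => by ring

lemma tprod_one_add_pow_odd (hx : ‖x‖ < 1) :
    ∏' n : ℕ, (1 + x ^ (2 * n + 1)) = eulerPhi (x ^ 2) ^ 2 / (eulerPhi x * eulerPhi (x ^ 4)) := by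
  have h₁ := eulerPhi_eq_tprod_mul_eulerPhi_sq hx
  have h₂ := eulerPhi_eq_tprod_mul_eulerPhi_sq (norm_pow_lt_one hx two_ne_zero)
  rw [← pow_mul] at h₂
  rw [eq_div_iff (mul_ne_zero (eulerPhi_ne_zero hx)
    (eulerPhi_ne_zero (norm_pow_lt_one hx four_ne_zero))), h₁]
  linear_combination eulerPhi (x ^ 2) * eulerPhi (x ^ 4) * tprod_one_add_mul_tprod_one_sub hx
    - eulerPhi (x ^ 2) * h₂

theorem tsum_zpow_sq_eq_eulerPhi (hx₀ : x ≠ 0) (hx : ‖x‖ < 1) :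
    ∑' m : ℤ, x ^ (m ^ 2) = eulerPhi (x ^ 2) ^ 5 / (eulerPhi x ^ 2 * eulerPhi (x ^ 4) ^ 2) := by
  rw [tsum_zpow_sq hx₀ hx, tprod_one_add_pow_odd hx]
  ring

end ProductIdentities

lemma norm_qq_lt_one {τ : ℂ} (hτ : 0 < τ.im) : ‖qq τ‖ < 1 :=
  UpperHalfPlane.norm_exp_two_pi_I_lt_one ⟨τ, hτ⟩

lemma qq_nat_mul (n : ℕ) (τ : ℂ) : qq (n * τ) = qq τ ^ n := by
  rw [qq, qq, ← Complex.exp_nat_mul]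
  ring_nf

lemma theta3_eq_tsum_qq_zpow (τ : ℂ) : theta3 τ = ∑' m : ℤ, qq τ ^ (m ^ 2) :=
  tsum_congr fun m => by
    rw [qq, ← Complex.exp_int_mul]
    push_cast
    ring_nf

lemma dedekindEta_nat_mul (n : ℕ) (τ : ℂ) :
    dedekindEta (n * τ) = Complex.exp (Real.pi * Complex.I * τ / 12) ^ n * eulerPhi (qq τ ^ n) := by
  rw [dedekindEta, qq_nat_mul, ← Complex.exp_nat_mul, eulerPhi]
  congr 2
  ring

theorem theta3_eq_eta_quotient {τ : ℂ} (hτ : 0 < τ.im) :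
    theta3 τ = dedekindEta (2 * τ) ^ 5 / (dedekindEta τ ^ 2 * dedekindEta (4 * τ) ^ 2) := by
  have h₁ := dedekindEta_nat_mul 1 τ
  have h₂ := dedekindEta_nat_mul 2 τ
  have h₄ := dedekindEta_nat_mul 4 τ
  simp only [Nat.cast_one, one_mul, pow_one, Nat.cast_ofNat] at h₁ h₂ h₄
  rw [theta3_eq_tsum_qq_zpow,
    tsum_zpow_sq_eq_eulerPhi (x := qq τ) (Complex.exp_ne_zero _) (norm_qq_lt_one hτ), h₁, h₂, h₄]
  field_simp

theorem theta3_sq_eta_quotient (τ : ℂ) (hτ : 0 < τ.im) :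
    theta3 τ ^ 2 = dedekindEta (2 * τ) ^ 10 / (dedekindEta τ ^ 4 * dedekindEta (4 * τ) ^ 4) := by
  rw [theta3_eq_eta_quotient hτ]
  ring
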